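/- For the explicit 4+1d gamma matrices, the Fierz-type identity γ_μ^{ab} γ^μ_{cd} = I^{ab} I_{cd} - 4 δ^{[a}_{[c} δ^{b]}_{d]} holds, where the sum over μ is taken with the metric η = diag(-1,1,1,1,1). -/
import Mathlib


open Matrix Complex

noncomputable section

/-- Pauli matrices -/
def σ1 : Matrix (Fin 2) (Fin 2) ℂ := !![0, 1; 1, 0]
def σ2 : Matrix (Fin 2) (Fin 2) ℂ := !![0, -I; I, 0]
def σ3 : Matrix (Fin 2) (Fin 2) ℂ := !![1, 0; 0, -1]

/-- The explicit 4+1d gamma matrices in 2×2 block form: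
γ⁰ = ((0,1),(1,0)), γᵏ = -i((σᵏ,0),(0,-σᵏ)), γ⁴ = ((0,-1),(1,0)). -/
def γ : Fin 5 → Matrix (Fin 4) (Fin 4) ℂ :=
  ![!![0,0,1,0; 0,0,0,1; 1,0,0,0; 0,1,0,0],
    !![0,-I,0,0; -I,0,0,0; 0,0,0,I; 0,0,I,0],
    !![0,-1,0,0; 1,0,0,0; 0,0,0,1; 0,0,-1,0],
    !![-I,0,0,0; 0,I,0,0; 0,0,I,0; 0,0,0,-I],
    !![0,0,-1,0; 0,0,0,-1; 1,0,0,0; 0,1,0,0]]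

/-- mostly-plus Minkowski metric diag(-1,1,1,1,1), complex-valued -/
def η : Fin 5 → ℂ := fun μ => if μ = 0 then -1 else 1

/-- mostly-plus Minkowski metric diag(-1,1,1,1,1), real-valued -/
def ηℝ : Fin 5 → ℝ := fun μ => if μ = 0 then -1 else 1

/-- symplectic spinor metric I_{ab} = -i((0,σ₂),(σ₂,0)) -/
def Imat : Matrix (Fin 4) (Fin 4) ℂ := !![0,0,0,-1; 0,0,1,0; 0,-1,0,0; 1,0,0,0]

/-- inverse spinor metric I^{ab}, characterized by I^{ac} I_{bc} = δ^a_b,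
i.e. Iup * Imatᵀ = 1, i.e. Iup = (Imatᵀ)⁻¹ -/
def Iup : Matrix (Fin 4) (Fin 4) ℂ := (Imat.transpose)⁻¹

/-- lowered-index gamma matrices γ^μ_{ab} = I_{ac}(γ^μ)^c{}_b -/
def glow (μ : Fin 5) : Matrix (Fin 4) (Fin 4) ℂ := Imat * γ μ

/-- raised-index gamma matrices γ^{μ ab} = I^{ca} I^{db} γ^μ_{cd} -/
def gup (μ : Fin 5) : Matrix (Fin 4) (Fin 4) ℂ :=
  fun a b => ∑ c, ∑ d, Iup c a * Iup d b * glow μ c d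

/-- γ^{μν}_{ab} = I_{ac}(γ^{[μ}γ^{ν]})^c{}_b with γ^{[μ}γ^{ν]} = (1/2)(γ^μγ^ν - γ^νγ^μ) -/
def gmnLow (μ ν : Fin 5) : Matrix (Fin 4) (Fin 4) ℂ :=
  Imat * ((1/2 : ℂ) • (γ μ * γ ν - γ ν * γ μ))

/-- γ^{μν ab} with both spinor indices raised -/
def gmnUp (μ ν : Fin 5) : Matrix (Fin 4) (Fin 4) ℂ :=
  fun a b => ∑ c, ∑ d, Iup c a * Iup d b * gmnLow μ ν c d

/-- contraction x^μ γ_μ of a (complex) vector with the gamma matrices -/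
def slash (x : Fin 5 → ℂ) : Matrix (Fin 4) (Fin 4) ℂ := ∑ μ, x μ • γ μ

/-- left-handed chiral projector P_L(x) = (1/2)(Id - i x^μ γ_μ) -/
def PL (x : Fin 5 → ℂ) : Matrix (Fin 4) (Fin 4) ℂ := (1/2 : ℂ) • (1 - I • slash x)

/-- right-handed chiral projector P_R(x) = (1/2)(Id + i x^μ γ_μ) -/
def PR (x : Fin 5 → ℂ) : Matrix (Fin 4) (Fin 4) ℂ := (1/2 : ℂ) • (1 + I • slash x)

/-- complexification of a real 5-vector -/
def cV (x : Fin 5 → ℝ) : Fin 5 → ℂ := fun μ => (x μ : ℂ)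

set_option maxHeartbeats 1000000

lemma ImatT : Imat.transpose = !![0,0,0,1; 0,0,-1,0; 0,1,0,0; -1,0,0,0] := by
  ext i j; fin_cases i <;> fin_cases j <;> rfl

lemma Iup_eq : Iup = Imat := by
  apply Matrix.inv_eq_right_inv
  rw [ImatT]
  ext i j
  fin_cases i <;> fin_cases j <;>
    simp [Imat, Matrix.mul_apply, Fin.sum_univ_four, Matrix.one_apply, Matrix.vecHead,
      Matrix.vecTail]

def glowZ : Fin 5 → Fin 4 → Fin 4 → GaussianInt :=
  ![![![0,-1,0,0], ![1,0,0,0], ![0,0,0,-1], ![0,0,1,0]],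
    ![![0,0,⟨0,-1⟩,0], ![0,0,0,⟨0,1⟩], ![⟨0,1⟩,0,0,0], ![0,⟨0,-1⟩,0,0]],
    ![![0,0,1,0], ![0,0,0,1], ![-1,0,0,0], ![0,-1,0,0]],
    ![![0,0,0,⟨0,1⟩], ![0,0,⟨0,1⟩,0], ![0,⟨0,-1⟩,0,0], ![⟨0,-1⟩,0,0,0]],
    ![![0,-1,0,0], ![1,0,0,0], ![0,0,0,1], ![0,0,-1,0]]]

def gupZ : Fin 5 → Fin 4 → Fin 4 → GaussianInt :=
  ![![![0,-1,0,0], ![1,0,0,0], ![0,0,0,-1], ![0,0,1,0]],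
    ![![0,0,⟨0,-1⟩,0], ![0,0,0,⟨0,1⟩], ![⟨0,1⟩,0,0,0], ![0,⟨0,-1⟩,0,0]],
    ![![0,0,-1,0], ![0,0,0,-1], ![1,0,0,0], ![0,1,0,0]],
    ![![0,0,0,⟨0,1⟩], ![0,0,⟨0,1⟩,0], ![0,⟨0,-1⟩,0,0], ![⟨0,-1⟩,0,0,0]],
    ![![0,1,0,0], ![-1,0,0,0], ![0,0,0,-1], ![0,0,1,0]]]

def ImatZ : Fin 4 → Fin 4 → GaussianInt :=
  ![![0,0,0,-1], ![0,0,1,0], ![0,-1,0,0], ![1,0,0,0]]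

def ηZ : Fin 5 → GaussianInt := fun μ => if μ = 0 then -1 else 1

lemma keyZ : ∀ a b c d : Fin 4,
    (∑ μ : Fin 5, ηZ μ * gupZ μ a b * glowZ μ c d)
      = ImatZ a b * ImatZ c d
        - 2 * ((if a = c then 1 else 0) * (if b = d then 1 else 0)
               - (if a = d then 1 else 0) * (if b = c then 1 else 0)) := by
  decide

lemma glow_toC : ∀ μ c d, glow μ c d = GaussianInt.toComplex (glowZ μ c d) := by
  intro μ
  fin_cases μ <;> intro c d <;> fin_cases c <;> fin_cases d <;>
    simp [glow, glowZ, γ, Imat, Matrix.mul_apply, Fin.sum_univ_four, Matrix.vecHead,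
      Matrix.vecTail, GaussianInt.toComplex_def']

lemma gup_toC : ∀ μ a b, gup μ a b = GaussianInt.toComplex (gupZ μ a b) := by
  intro μ
  fin_cases μ <;> intro a b <;> fin_cases a <;> fin_cases b <;>
    simp [gup, Iup_eq, glow_toC, glowZ, gupZ, Imat, Fin.sum_univ_four, Matrix.vecHead,
      Matrix.vecTail, GaussianInt.toComplex_def']

lemma η_toC : ∀ μ, η μ = GaussianInt.toComplex (ηZ μ) := by
  intro μ; unfold η ηZ; split <;> simp

lemma Imat_toC : ∀ a b, Imat a b = GaussianInt.toComplex (ImatZ a b) := by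
  intro a b
  fin_cases a <;> fin_cases b <;>
    simp [Imat, ImatZ, Matrix.vecHead, Matrix.vecTail, GaussianInt.toComplex_def']

/-- the Fierz-type identity
γ_μ^{ab} γ^μ_{cd} = I^{ab} I_{cd} - 4 δ^{[a}_{[c} δ^{b]}_{d]},
with the sum over μ taken with η = diag(-1,1,1,1,1), and
δ^{[a}_{[c}δ^{b]}_{d]} = (1/2)(δ^a_c δ^b_d - δ^a_d δ^b_c). -/
theorem fierz_identity :
    ∀ a b c d : Fin 4,
      (∑ μ, η μ * gup μ a b * glow μ c d)
        = Iup a b * Imat c d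
          - 4 * ((1/2 : ℂ) * ((if a = c then 1 else 0) * (if b = d then 1 else 0)
                              - (if a = d then 1 else 0) * (if b = c then 1 else 0))) := by
  intro a b c d
  have hL : (∑ μ, η μ * gup μ a b * glow μ c d)
      = GaussianInt.toComplex (∑ μ : Fin 5, ηZ μ * gupZ μ a b * glowZ μ c d) := by
    rw [map_sum]
    refine Finset.sum_congr rfl fun μ _ => ?_
    rw [η_toC, gup_toC, glow_toC, _root_.map_mul, _root_.map_mul]
  rw [hL, keyZ, Iup_eq, Imat_toC a b, Imat_toC c d]
  simp only [map_sub, _root_.map_mul, map_ofNat, _root_.map_one, map_zero,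
    apply_ite GaussianInt.toComplex]
  ring
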